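/- Let α, β be injective partial endomorphisms of the path P_n. Then α and β are R-related in IEnd(P_n) (there exist γ, δ ∈ IEnd(P_n) with β = αγ and α = βδ) if and only if Dom α = Dom β and α⁻¹β is a partial automorphism of P_n. -/

import Mathlib

/-! If `β = αγ` then the graph of `α⁻¹β` lies inside that of `γ`, so `α⁻¹β` preserves adjacency;
symmetrically `β⁻¹α ⊆ δ` preserves adjacency, which says that `α⁻¹β` reflects it. Conversely,
when `Dom α = Dom β` the maps `γ = α⁻¹β` and `δ = β⁻¹α` satisfy `αγ = β` and `βδ = α`. -/

open scoped Classical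

/-- `adj u v` means `|u - v| = 1`, i.e. `u` and `v` are adjacent in the path. -/
def adj (u v : ℕ) : Prop := u + 1 = v ∨ v + 1 = u

/-- `f` is an injective partial endomorphism of the path `P_n` on `{1,…,n}`. -/
structure IsIEnd (n : ℕ) (f : ℕ →. ℕ) : Prop where
  dom_subset : f.Dom ⊆ Set.Icc 1 n
  ran_subset : f.ran ⊆ Set.Icc 1 n
  inj : ∀ ⦃x y a : ℕ⦄, a ∈ f x → a ∈ f y → x = y
  edge : ∀ ⦃u v a b : ℕ⦄, a ∈ f u → b ∈ f v → adj u v → adj a b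

/-- `f` is a partial automorphism of the path `P_n`. -/
def IsPAut (n : ℕ) (f : ℕ →. ℕ) : Prop :=
  IsIEnd n f ∧ ∀ ⦃u v a b : ℕ⦄, a ∈ f u → b ∈ f v → adj a b → adj u v

/-- Left-to-right composition of partial maps: `x (pcomp f g) = (x f) g`. -/
def pcomp (f g : ℕ →. ℕ) : ℕ →. ℕ := PFun.comp g f

/-- The inverse of an injective partial map. -/
noncomputable def pinv (f : ℕ →. ℕ) : ℕ →. ℕ :=
  fun y => ⟨∃ x, y ∈ f x, fun h => h.choose⟩

/-- `I` is an interval of `X`: a set of consecutive integers contained in `X`. -/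
def IsIntervalOf (I X : Set ℕ) : Prop :=
  I ⊆ X ∧ ∀ ⦃x⦄, x ∈ I → ∀ ⦃y⦄, y ∈ I → ∀ ⦃z : ℕ⦄, x < z → z < y → z ∈ I

/-- `I` is a maximal interval of `X`. -/
def IsMaxIntervalOf (I X : Set ℕ) : Prop :=
  IsIntervalOf I X ∧ ∀ J, IsIntervalOf J X → I ⊆ J → I = J

def PInjective (f : ℕ →. ℕ) : Prop :=
  ∀ ⦃x y a : ℕ⦄, a ∈ f x → a ∈ f y → x = y

def PreservesAdj (f : ℕ →. ℕ) : Prop :=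
  ∀ ⦃u v a b : ℕ⦄, a ∈ f u → b ∈ f v → adj u v → adj a b

def ReflectsAdj (f : ℕ →. ℕ) : Prop :=
  ∀ ⦃u v a b : ℕ⦄, a ∈ f u → b ∈ f v → adj a b → adj u v

lemma mem_pcomp {f g : ℕ →. ℕ} {x b : ℕ} : b ∈ pcomp f g x ↔ ∃ a ∈ f x, b ∈ g a :=
  Part.mem_bind_iff

lemma dom_pcomp_subset (f g : ℕ →. ℕ) : (pcomp f g).Dom ⊆ f.Dom := by
  intro x hx
  obtain ⟨b, hb⟩ := (PFun.mem_dom _ _).1 hx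
  obtain ⟨a, ha, -⟩ := mem_pcomp.1 hb
  exact (PFun.mem_dom _ _).2 ⟨a, ha⟩

lemma mem_pinv {f : ℕ →. ℕ} (hf : PInjective f) {x y : ℕ} : x ∈ pinv f y ↔ y ∈ f x := by
  constructor
  · rintro ⟨h, rfl⟩
    exact h.choose_spec
  · intro hx
    have h : ∃ x, y ∈ f x := ⟨x, hx⟩
    exact ⟨h, hf h.choose_spec hx⟩

lemma mem_pcomp_pinv {f g : ℕ →. ℕ} (hf : PInjective f) {a c : ℕ} :
    c ∈ pcomp (pinv f) g a ↔ ∃ x, a ∈ f x ∧ c ∈ g x := by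
  simp only [mem_pcomp, mem_pinv hf]

lemma mem_pcomp_pinv_comm {f g : ℕ →. ℕ} (hf : PInjective f) (hg : PInjective g) {a c : ℕ} :
    c ∈ pcomp (pinv f) g a ↔ a ∈ pcomp (pinv g) f c := by
  simp only [mem_pcomp_pinv hf, mem_pcomp_pinv hg, and_comm]

lemma reflectsAdj_pcomp_pinv_iff {f g : ℕ →. ℕ} (hf : PInjective f) (hg : PInjective g) :
    ReflectsAdj (pcomp (pinv f) g) ↔ PreservesAdj (pcomp (pinv g) f) := by
  simp only [ReflectsAdj, PreservesAdj, mem_pcomp_pinv_comm hf hg]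
  exact ⟨fun h _ _ _ _ hu hv => h hu hv, fun h _ _ _ _ hu hv => h hu hv⟩

lemma mem_of_mem_pcomp_pinv_pcomp {f g : ℕ →. ℕ} (hf : PInjective f) {a c : ℕ}
    (h : c ∈ pcomp (pinv f) (pcomp f g) a) : c ∈ g a := by
  obtain ⟨x, hax, hcx⟩ := (mem_pcomp_pinv hf).1 h
  obtain ⟨a', ha'x, hc⟩ := mem_pcomp.1 hcx
  rwa [Part.mem_unique hax ha'x]

lemma PreservesAdj.of_mem_imp {f g : ℕ →. ℕ} (hg : PreservesAdj g)
    (hfg : ∀ ⦃a c⦄, c ∈ f a → c ∈ g a) : PreservesAdj f :=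
  fun _ _ _ _ ha hb huv => hg (hfg ha) (hfg hb) huv

lemma pcomp_pcomp_pinv {f g : ℕ →. ℕ} (hf : PInjective f) (hdom : g.Dom ⊆ f.Dom) :
    pcomp f (pcomp (pinv f) g) = g := by
  refine PFun.ext fun x b => ?_
  rw [mem_pcomp]
  constructor
  · rintro ⟨a, ha, hb⟩
    obtain ⟨x', hax', hbx'⟩ := (mem_pcomp_pinv hf).1 hb
    rwa [hf ha hax']
  · intro hb
    obtain ⟨a, ha⟩ := (PFun.mem_dom _ _).1 (hdom ((PFun.mem_dom _ _).2 ⟨b, hb⟩))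
    exact ⟨a, ha, (mem_pcomp_pinv hf).2 ⟨x, ha, hb⟩⟩

lemma IsIEnd.pcomp_pinv {n : ℕ} {f g : ℕ →. ℕ} (hf : IsIEnd n f) (hg : IsIEnd n g)
    (hadj : PreservesAdj (pcomp (pinv f) g)) : IsIEnd n (pcomp (pinv f) g) where
  dom_subset a ha := by
    obtain ⟨c, hc⟩ := (PFun.mem_dom _ _).1 ha
    obtain ⟨x, hax, -⟩ := (mem_pcomp_pinv hf.inj).1 hc
    exact hf.ran_subset ⟨x, hax⟩
  ran_subset c hc := by
    obtain ⟨a, hc⟩ := hc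
    obtain ⟨x, -, hcx⟩ := (mem_pcomp_pinv hf.inj).1 hc
    exact hg.ran_subset ⟨x, hcx⟩
  inj _ _ _ ha ha' := by
    obtain ⟨x, hax, hcx⟩ := (mem_pcomp_pinv hf.inj).1 ha
    obtain ⟨x', hax', hcx'⟩ := (mem_pcomp_pinv hf.inj).1 ha'
    rw [hg.inj hcx hcx'] at hax
    exact Part.mem_unique hax hax'
  edge := hadj

theorem stmt7 (n : ℕ) (α β : ℕ →. ℕ) (hα : IsIEnd n α) (hβ : IsIEnd n β) :
    (∃ γ δ : ℕ →. ℕ, IsIEnd n γ ∧ IsIEnd n δ ∧ β = pcomp α γ ∧ α = pcomp β δ) ↔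
    (α.Dom = β.Dom ∧ IsPAut n (pcomp (pinv α) β)) := by
  constructor
  · rintro ⟨γ, δ, hγ, hδ, hβγ, hαδ⟩
    have hdom : α.Dom = β.Dom :=
      (hαδ ▸ dom_pcomp_subset β δ).antisymm (hβγ ▸ dom_pcomp_subset α γ)
    have hγadj : PreservesAdj (pcomp (pinv α) β) :=
      PreservesAdj.of_mem_imp hγ.edge fun _ _ h => mem_of_mem_pcomp_pinv_pcomp hα.inj (hβγ ▸ h)
    have hδadj : PreservesAdj (pcomp (pinv β) α) :=
      PreservesAdj.of_mem_imp hδ.edge fun _ _ h => mem_of_mem_pcomp_pinv_pcomp hβ.inj (hαδ ▸ h)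
    exact ⟨hdom, hα.pcomp_pinv hβ hγadj, (reflectsAdj_pcomp_pinv_iff hα.inj hβ.inj).2 hδadj⟩
  · rintro ⟨hdom, hαβ, hαβ_refl⟩
    have hβα : IsIEnd n (pcomp (pinv β) α) :=
      hβ.pcomp_pinv hα ((reflectsAdj_pcomp_pinv_iff hα.inj hβ.inj).1 hαβ_refl)
    exact ⟨_, _, hαβ, hβα, (pcomp_pcomp_pinv hα.inj hdom.ge).symm,
      (pcomp_pcomp_pinv hβ.inj hdom.le).symm⟩
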